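/- With the same hypotheses, define W_Coss(X,Y) := W_mixt(X,Y) − ((μ−μ_c)²/(2(μ+μ_c))) (n₀ᵀX)·(n₀ᵀY). Then W_Coss(X,Y) = W_mixt(aX, aY) + (2μμ_c/(μ+μ_c)) (n₀ᵀX)·(n₀ᵀY), i.e., W_Coss differs from W_mixt only in replacing the transverse shear coefficient (μ+μ_c)/2 by the harmonic mean 2μμ_c/(μ+μ_c). -/
import Mathlib


open Matrix

/-- Frobenius inner product of 3×3 real matrices. -/
def frobInner (A B : Matrix (Fin 3) (Fin 3) ℝ) : ℝ := Matrix.trace (Aᵀ * B)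

/-- Symmetric part. -/
noncomputable def symPart (A : Matrix (Fin 3) (Fin 3) ℝ) : Matrix (Fin 3) (Fin 3) ℝ :=
  (2 : ℝ)⁻¹ • (A + Aᵀ)

/-- Skew-symmetric part. -/
noncomputable def skewPart (A : Matrix (Fin 3) (Fin 3) ℝ) : Matrix (Fin 3) (Fin 3) ℝ :=
  (2 : ℝ)⁻¹ • (A - Aᵀ)

lemma frob_sym (A B : Matrix (Fin 3) (Fin 3) ℝ) :
    frobInner (symPart A) (symPart B)
      = (Matrix.trace (A * B) + Matrix.trace (Aᵀ * B)) / 2 := by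
  have h1 : Matrix.trace (Aᵀ * Bᵀ) = Matrix.trace (A * B) := by
    rw [← Matrix.transpose_mul, Matrix.trace_transpose, Matrix.trace_mul_comm]
  have h2 : Matrix.trace (A * Bᵀ) = Matrix.trace (Aᵀ * B) := by
    rw [← Matrix.trace_transpose (A * Bᵀ), Matrix.transpose_mul, Matrix.transpose_transpose,
      Matrix.trace_mul_comm]
  simp only [frobInner, symPart, Matrix.transpose_smul, Matrix.transpose_add,
    Matrix.transpose_transpose, Matrix.smul_mul, Matrix.mul_smul, Matrix.add_mul,
    Matrix.mul_add, Matrix.trace_smul, Matrix.trace_add, smul_eq_mul]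
  rw [h1, h2]; ring

lemma frob_skew (A B : Matrix (Fin 3) (Fin 3) ℝ) :
    frobInner (skewPart A) (skewPart B)
      = (Matrix.trace (Aᵀ * B) - Matrix.trace (A * B)) / 2 := by
  have h1 : Matrix.trace (Aᵀ * Bᵀ) = Matrix.trace (A * B) := by
    rw [← Matrix.transpose_mul, Matrix.trace_transpose, Matrix.trace_mul_comm]
  have h2 : Matrix.trace (A * Bᵀ) = Matrix.trace (Aᵀ * B) := by
    rw [← Matrix.trace_transpose (A * Bᵀ), Matrix.transpose_mul, Matrix.transpose_transpose,
      Matrix.trace_mul_comm]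
  simp only [frobInner, skewPart, Matrix.transpose_smul, Matrix.transpose_sub,
    Matrix.transpose_transpose, Matrix.smul_mul, Matrix.mul_smul, Matrix.sub_mul,
    Matrix.mul_sub, Matrix.trace_smul, Matrix.trace_sub, smul_eq_mul]
  rw [h1, h2]; ring

lemma mul_N_eq_zero (n : Fin 3 → ℝ) (X : Matrix (Fin 3) (Fin 3) ℝ) (hX : X *ᵥ n = 0) :
    X * vecMulVec n n = 0 := by
  ext i j
  have h := congrFun hX i
  simp only [Matrix.mulVec, dotProduct, Fin.sum_univ_three, Pi.zero_apply] at h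
  simp only [Matrix.mul_apply, Matrix.vecMulVec_apply, Fin.sum_univ_three,
    Matrix.zero_apply]
  linear_combination n j * h

lemma N_mul_N (n : Fin 3 → ℝ) (hn : n ⬝ᵥ n = 1) :
    vecMulVec n n * vecMulVec n n = vecMulVec n n := by
  ext i j
  simp only [dotProduct, Fin.sum_univ_three] at hn
  simp only [Matrix.mul_apply, Matrix.vecMulVec_apply, Fin.sum_univ_three]
  linear_combination (n i * n j) * hn

lemma trace_XtNY (n : Fin 3 → ℝ) (X Y : Matrix (Fin 3) (Fin 3) ℝ) :
    Matrix.trace (Xᵀ * (vecMulVec n n * Y)) = (n ᵥ* X) ⬝ᵥ (n ᵥ* Y) := by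
  simp only [Matrix.trace, Matrix.diag, Matrix.mul_apply, Matrix.vecMulVec_apply,
    Matrix.transpose_apply, dotProduct, Matrix.vecMul, Fin.sum_univ_three]
  ring

lemma trace_XN (n : Fin 3 → ℝ) (X : Matrix (Fin 3) (Fin 3) ℝ) (hX : X *ᵥ n = 0) :
    Matrix.trace (vecMulVec n n * X) = 0 := by
  rw [Matrix.trace_mul_comm, mul_N_eq_zero n X hX, Matrix.trace_zero]

/-- The alternative Cosserat bilinear form `W_Coss(X,Y) := W_mixt(X,Y)
− ((μ−μ_c)²/(2(μ+μ_c)))(n₀ᵀX)·(n₀ᵀY)` satisfies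
`W_Coss(X,Y) = W_mixt(aX, aY) + (2μμ_c/(μ+μ_c))(n₀ᵀX)·(n₀ᵀY)`,
i.e., the transverse shear coefficient becomes the harmonic mean. -/
theorem WCoss_splitting
    (μ μc lam : ℝ) (hμ : 0 < μ) (hμc : 0 < μc) (hlam : 0 < lam) (hl2μ : 0 < lam + 2 * μ)
    (n₀ : Fin 3 → ℝ) (hn : n₀ ⬝ᵥ n₀ = 1)
    (X Y : Matrix (Fin 3) (Fin 3) ℝ)
    (hX : X *ᵥ n₀ = 0) (hY : Y *ᵥ n₀ = 0) :
    let Wmixt : Matrix (Fin 3) (Fin 3) ℝ → Matrix (Fin 3) (Fin 3) ℝ → ℝ := fun A B =>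
      μ * frobInner (symPart A) (symPart B) + μc * frobInner (skewPart A) (skewPart B)
        + (lam * μ / (lam + 2 * μ)) * (Matrix.trace A * Matrix.trace B)
    let WCoss : Matrix (Fin 3) (Fin 3) ℝ → Matrix (Fin 3) (Fin 3) ℝ → ℝ := fun A B =>
      Wmixt A B - ((μ - μc) ^ 2 / (2 * (μ + μc))) * ((n₀ ᵥ* A) ⬝ᵥ (n₀ ᵥ* B))
    let a : Matrix (Fin 3) (Fin 3) ℝ := 1 - vecMulVec n₀ n₀
    WCoss X Y = Wmixt (a * X) (a * Y)
      + (2 * μ * μc / (μ + μc)) * ((n₀ ᵥ* X) ⬝ᵥ (n₀ ᵥ* Y)) := by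
  intro Wmixt WCoss a
  set N : Matrix (Fin 3) (Fin 3) ℝ := vecMulVec n₀ n₀ with hN
  have hNt : Nᵀ = N := by
    ext i j
    simp only [hN, Matrix.transpose_apply, Matrix.vecMulVec_apply]
    ring
  have hXN : X * N = 0 := mul_N_eq_zero n₀ X hX
  have hYN : Y * N = 0 := mul_N_eq_zero n₀ Y hY
  have hNN : N * N = N := N_mul_N n₀ hn
  have hp : Matrix.trace (Xᵀ * (N * Y)) = (n₀ ᵥ* X) ⬝ᵥ (n₀ ᵥ* Y) := trace_XtNY n₀ X Y
  have haX : a * X = X - N * X := by rw [Matrix.sub_mul, Matrix.one_mul]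
  have haY : a * Y = Y - N * Y := by rw [Matrix.sub_mul, Matrix.one_mul]
  -- trace of product of projected matrices
  have t1 : Matrix.trace ((X - N * X) * (Y - N * Y)) = Matrix.trace (X * Y) := by
    have e1 : Matrix.trace (X * (N * Y)) = 0 := by
      rw [← Matrix.mul_assoc, hXN, Matrix.zero_mul, Matrix.trace_zero]
    have e2 : Matrix.trace ((N * X) * Y) = 0 := by
      rw [Matrix.mul_assoc, Matrix.trace_mul_comm, Matrix.mul_assoc, hYN, Matrix.mul_zero,
        Matrix.trace_zero]
    have e3 : Matrix.trace ((N * X) * (N * Y)) = 0 := by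
      have h : (N * X) * (N * Y) = 0 := by
        rw [Matrix.mul_assoc, ← Matrix.mul_assoc X N Y, hXN, Matrix.zero_mul, Matrix.mul_zero]
      rw [h, Matrix.trace_zero]
    rw [Matrix.sub_mul, Matrix.mul_sub, Matrix.mul_sub, Matrix.trace_sub, Matrix.trace_sub,
      Matrix.trace_sub, e1, e2, e3]
    ring
  have t2 : Matrix.trace ((X - N * X)ᵀ * (Y - N * Y))
      = Matrix.trace (Xᵀ * Y) - (n₀ ᵥ* X) ⬝ᵥ (n₀ ᵥ* Y) := by
    have ht : (X - N * X)ᵀ = Xᵀ - Xᵀ * N := by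
      rw [Matrix.transpose_sub, Matrix.transpose_mul, hNt]
    have e1 : Matrix.trace ((Xᵀ * N) * Y) = (n₀ ᵥ* X) ⬝ᵥ (n₀ ᵥ* Y) := by
      rw [Matrix.mul_assoc, hp]
    have e2 : Matrix.trace ((Xᵀ * N) * (N * Y)) = (n₀ ᵥ* X) ⬝ᵥ (n₀ ᵥ* Y) := by
      rw [Matrix.mul_assoc, ← Matrix.mul_assoc N N Y, hNN, hp]
    rw [ht, Matrix.sub_mul, Matrix.mul_sub, Matrix.mul_sub, Matrix.trace_sub, Matrix.trace_sub,
      Matrix.trace_sub, hp, e1, e2]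
    ring
  have t3 : Matrix.trace (X - N * X) = Matrix.trace X := by
    rw [Matrix.trace_sub, trace_XN n₀ X hX, sub_zero]
  have t4 : Matrix.trace (Y - N * Y) = Matrix.trace Y := by
    rw [Matrix.trace_sub, trace_XN n₀ Y hY, sub_zero]
  have hμμc : μ + μc ≠ 0 := by positivity
  have hl2 : lam + 2 * μ ≠ 0 := ne_of_gt hl2μ
  simp only [WCoss, Wmixt, a, haX, haY, frob_sym, frob_skew, t1, t2, t3, t4]
  set q : ℝ := (n₀ ᵥ* X) ⬝ᵥ (n₀ ᵥ* Y)
  set tA : ℝ := Matrix.trace (X * Y)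
  set tB : ℝ := Matrix.trace (Xᵀ * Y)
  set tX : ℝ := Matrix.trace X
  set tY : ℝ := Matrix.trace Y
  field_simp
  ring
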